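/- arXiv:1305.5947 — 6 statements merged into one kernel-verified Lean document; each statement's English description precedes it below -/
import Mathlib

section
/- For integers p ≥ 2 and nonnegative integers D and d: if D − d is not divisible by p − 1 then q_p(D,d) = 0, and if D − d is divisible by p − 1 then q_p(D,d) = r_p((D−d)/(p−1), d). Here the bijection is given by sending a sequence (n_0, n_1, ...) with Σ n_i p^i = D and Σ n_i = d to the sequence (m_0, m_1, ...) with m_j = Σ_{i ≥ j+1} n_i. -/
/-- `q_p(D,d)`: the number of finitely supported sequences `n` of nonnegative integers with
`Σ n_i p^i = D` and `Σ n_i = d`. -/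
noncomputable def qp (p D d : ℕ) : ℕ :=
  {n : ℕ →₀ ℕ | (n.sum fun i a => a * p ^ i) = D ∧ (n.sum fun _ a => a) = d}.ncard

/-- `r_p(M,d)`: the number of finitely supported nonincreasing sequences `m` of nonnegative
integers with `m 0 ≤ d` and `Σ m_i p^i = M`. -/
noncomputable def rp (p : ℤ) (M d : ℤ) : ℕ :=
  {m : ℕ →₀ ℤ | (∀ i, 0 ≤ m i) ∧ (∀ i, m (i + 1) ≤ m i) ∧ m 0 ≤ d ∧
    (m.sum fun i a => a * p ^ i) = M}.ncard

/-!
Sending `n` to its tail sums `m_j = ∑_{i > j} n_i` is a bijection from sequences with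
`∑ n_i = d` onto nonincreasing nonnegative sequences with `m_0 ≤ d`; the inverse takes
differences, `n_0 = d - m_0` and `n_{k+1} = m_k - m_{k+1}`. Summing
`n_i (p^i - 1) = (p - 1) n_i ∑_{j < i} p^j` over `i` gives
`∑ n_i p^i - ∑ n_i = (p - 1) ∑ m_j p^j`, so `D - d` is a multiple of `p - 1` and the bijection
sends weight `D` to weight `(D - d)/(p - 1)`.
-/

open Finset

/-- `tailSum n j = ∑_{i > j} n i`, written as a combination of the indicators of `range i` so
that weighted sums of it can be computed by linearity. -/
noncomputable def tailSum (n : ℕ →₀ ℕ) : ℕ →₀ ℤ :=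
  n.sum fun i a => (a : ℤ) • ∑ j ∈ range i, Finsupp.single j 1

lemma tailSum_apply (n : ℕ →₀ ℕ) (j : ℕ) :
    tailSum n j = n.sum fun i a => if j < i then (a : ℤ) else 0 := by
  simp [tailSum, Finsupp.sum_apply, Finsupp.single_apply]

lemma tailSum_nonneg (n : ℕ →₀ ℕ) (j : ℕ) : 0 ≤ tailSum n j := by
  rw [tailSum_apply]
  exact Finset.sum_nonneg fun i _ => by dsimp only; split_ifs <;> positivity

lemma tailSum_eq_tailSum_succ_add (n : ℕ →₀ ℕ) (j : ℕ) :
    tailSum n j = tailSum n (j + 1) + n (j + 1) := by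
  have hn : (n (j + 1) : ℤ) = n.sum fun i a => if i = j + 1 then (a : ℤ) else 0 := by simp
  rw [tailSum_apply, tailSum_apply, hn, ← Finsupp.sum_add]
  refine Finsupp.sum_congr fun i _ => ?_
  split_ifs <;> omega

lemma tailSum_zero_add (n : ℕ →₀ ℕ) :
    tailSum n 0 + n 0 = n.sum fun _ a => (a : ℤ) := by
  have hn : (n 0 : ℤ) = n.sum fun i a => if i = 0 then (a : ℤ) else 0 := by simp
  rw [tailSum_apply, hn, ← Finsupp.sum_add]
  refine Finsupp.sum_congr fun i _ => ?_
  split_ifs <;> omega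

lemma sub_one_mul_sum_tailSum_add (x : ℤ) (n : ℕ →₀ ℕ) :
    (x - 1) * ((tailSum n).sum fun j a => a * x ^ j) + (n.sum fun _ a => (a : ℤ)) =
      n.sum fun i a => (a : ℤ) * x ^ i := by
  have hlin : ∀ m : ℕ →₀ ℤ,
      (m.sum fun j a => a * x ^ j) = Finsupp.linearCombination ℤ (x ^ ·) m :=
    fun m => by simp [Finsupp.linearCombination_apply]
  rw [hlin, tailSum, map_finsuppSum, Finsupp.mul_sum, ← Finsupp.sum_add]
  refine Finsupp.sum_congr fun i _ => ?_
  simp only [map_smul, map_sum, Finsupp.linearCombination_single, smul_eq_mul, one_mul]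
  linear_combination (n i : ℤ) * geom_sum_mul x i

lemma tailSum_succ_le (n : ℕ →₀ ℕ) (j : ℕ) : tailSum n (j + 1) ≤ tailSum n j := by
  linarith [tailSum_eq_tailSum_succ_add n j, (n (j + 1)).cast_nonneg (α := ℤ)]

lemma Finsupp.eq_zero_of_apply_succ {M : Type*} [Zero M] {f : ℕ →₀ M}
    (h : ∀ j, f (j + 1) = f j) : f = 0 := by
  have hconst : ∀ j, f j = f 0 := fun j => by
    induction j with
    | zero => rfl
    | succ j ih => rw [h, ih]
  obtain ⟨k, hk⟩ := f.support.exists_notMem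
  ext j
  rw [hconst, ← hconst k, Finsupp.notMem_support_iff.mp hk, Finsupp.zero_apply]

noncomputable def tailDiff (d : ℕ) (m : ℕ →₀ ℤ) : ℕ →₀ ℕ :=
  Finsupp.onFinset (insert 0 (m.support ∪ m.support.image (· + 1)))
    (fun | 0 => (d - m 0).toNat | k + 1 => (m k - m (k + 1)).toNat)
    (by
      rintro (_ | k) hk
      · exact mem_insert_self _ _
      · contrapose! hk
        simp_all)

lemma tailDiff_zero {d : ℕ} {m : ℕ →₀ ℤ} (hd : m 0 ≤ d) :
    (tailDiff d m 0 : ℤ) = d - m 0 :=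
  Int.toNat_of_nonneg (sub_nonneg.mpr hd)

lemma tailDiff_succ {d : ℕ} {m : ℕ →₀ ℤ} {k : ℕ} (hk : m (k + 1) ≤ m k) :
    (tailDiff d m (k + 1) : ℤ) = m k - m (k + 1) :=
  Int.toNat_of_nonneg (sub_nonneg.mpr hk)

lemma tailDiff_tailSum {d : ℕ} {n : ℕ →₀ ℕ} (hd : (n.sum fun _ a => a) = d) :
    tailDiff d (tailSum n) = n := by
  have hd' : (n.sum fun _ a => (a : ℤ)) = d := by rw [← hd, Nat.cast_finsupp_sum]
  ext (_ | k) <;> apply Int.natCast_inj.mp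
  · rw [tailDiff_zero] <;> linarith [tailSum_zero_add n, (n 0).cast_nonneg (α := ℤ)]
  · rw [tailDiff_succ] <;>
      linarith [tailSum_eq_tailSum_succ_add n k, (n (k + 1)).cast_nonneg (α := ℤ)]

lemma tailSum_tailDiff {d : ℕ} {m : ℕ →₀ ℤ} (hm : ∀ i, m (i + 1) ≤ m i) :
    tailSum (tailDiff d m) = m := by
  refine sub_eq_zero.mp (Finsupp.eq_zero_of_apply_succ fun j => ?_)
  simp only [Finsupp.sub_apply]
  linarith [tailSum_eq_tailSum_succ_add (tailDiff d m) j, tailDiff_succ (d := d) (hm j)]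

lemma sum_tailDiff {d : ℕ} {m : ℕ →₀ ℤ} (hm : ∀ i, m (i + 1) ≤ m i) (hd : m 0 ≤ d) :
    ((tailDiff d m).sum fun _ a => a) = d := by
  have := tailSum_zero_add (tailDiff d m)
  rw [tailSum_tailDiff hm, tailDiff_zero hd, ← Nat.cast_finsupp_sum] at this
  omega

lemma sub_one_mul_sum_tailSum {p D d : ℕ} {n : ℕ →₀ ℕ}
    (hD : (n.sum fun i a => a * p ^ i) = D) (hd : (n.sum fun _ a => a) = d) :
    ((p : ℤ) - 1) * ((tailSum n).sum fun j a => a * (p : ℤ) ^ j) = D - d := by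
  have := sub_one_mul_sum_tailSum_add p n
  rw [← hD, ← hd]
  push_cast [Nat.cast_finsupp_sum]
  linarith

lemma sum_tailDiff_mul_pow (p : ℕ) {d : ℕ} {m : ℕ →₀ ℤ} (hm : ∀ i, m (i + 1) ≤ m i)
    (hd : m 0 ≤ d) :
    (((tailDiff d m).sum fun i a => a * p ^ i : ℕ) : ℤ) =
      (p - 1) * (m.sum fun j a => a * (p : ℤ) ^ j) + d := by
  have := sub_one_mul_sum_tailSum_add p (tailDiff d m)
  rw [tailSum_tailDiff hm, ← Nat.cast_finsupp_sum, sum_tailDiff hm hd] at this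
  push_cast [Nat.cast_finsupp_sum]
  linarith

/-- if `p − 1 ∤ D − d` then `q_p(D,d) = 0`, and if `p − 1 ∣ D − d` then
`q_p(D,d) = r_p((D−d)/(p−1), d)`. -/
theorem stmt_1 (p : ℕ) (hp : 2 ≤ p) (D d : ℕ) :
    (¬ ((p : ℤ) - 1 ∣ (D : ℤ) - d) → qp p D d = 0) ∧
    (((p : ℤ) - 1 ∣ (D : ℤ) - d) →
      qp p D d = rp p (((D : ℤ) - d) / ((p : ℤ) - 1)) d) := by
  constructor
  · intro hndvd
    refine (congrArg Set.ncard (Set.eq_empty_of_forall_notMem fun n hn =>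
      hndvd ⟨_, (sub_one_mul_sum_tailSum hn.1 hn.2).symm⟩)).trans (Set.ncard_empty _)
  · intro hdvd
    have hp1 : (p : ℤ) - 1 ≠ 0 := by omega
    have hM := Int.mul_ediv_cancel' hdvd
    refine Set.ncard_congr (fun n _ => tailSum n) ?_ ?_ ?_
    · rintro n ⟨hD, hd⟩
      refine ⟨tailSum_nonneg n, tailSum_succ_le n, ?_, ?_⟩
      · rw [← hd, Nat.cast_finsupp_sum, ← tailSum_zero_add]
        exact le_add_of_nonneg_right (n 0).cast_nonneg
      · exact mul_left_cancel₀ hp1 (by rw [sub_one_mul_sum_tailSum hD hd, hM])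
    · rintro n n' ⟨-, hd⟩ ⟨-, hd'⟩ h
      rw [← tailDiff_tailSum hd, h, tailDiff_tailSum hd']
    · rintro m ⟨-, hm, hd, hmM⟩
      refine ⟨tailDiff d m, ⟨?_, sum_tailDiff hm hd⟩, tailSum_tailDiff hm⟩
      have := sum_tailDiff_mul_pow p hm hd
      rw [hmM, hM] at this
      omega
end

section
/- For an integer p ≥ 2 and nonnegative integers M and d, one has r_p(M,d) = Σ_{(M−d)/p ≤ N ≤ M/p} r_p(N, M − N·p), where the sum is over integers N in the indicated range. -/
/-!
Cutting a sequence `m` into its head `m 0` and its tail `(m 1, m 2, …)` gives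
`Σ mᵢ pⁱ = m 0 + N p` with `N` the weighted sum of the tail. The tail is again admissible, with
`m 0 = M - N p` as the bound on its first term, and `0 ≤ m 0 ≤ d` says exactly
`(M - d)/p ≤ N ≤ M/p`. For `p ≥ 2` an index `j` in the support satisfies `j < pʲ ≤ M`, so all
these sets are finite and counting commutes with the disjoint union over `N`.
-/

namespace Finsupp

variable {M : Type*}

noncomputable def natCons [AddZeroClass M] (a : M) (f : ℕ →₀ M) : ℕ →₀ M :=
  single 0 a + f.embDomain ⟨Nat.succ, Nat.succ_injective⟩

noncomputable def natTail [Zero M] (f : ℕ →₀ M) : ℕ →₀ M :=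
  f.comapDomain Nat.succ Nat.succ_injective.injOn

@[simp]
lemma natTail_apply [Zero M] (f : ℕ →₀ M) (i : ℕ) : f.natTail i = f (i + 1) := rfl

section AddZeroClass

variable [AddZeroClass M]

@[simp]
lemma natCons_apply_zero (a : M) (f : ℕ →₀ M) : natCons a f 0 = a := by
  simp [natCons, embDomain_of_notMem_range]

@[simp]
lemma natCons_apply_succ (a : M) (f : ℕ →₀ M) (i : ℕ) : natCons a f (i + 1) = f i := by
  simp [natCons, embDomain_apply]

lemma natCons_natTail (f : ℕ →₀ M) : natCons (f 0) f.natTail = f := by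
  ext (_ | i) <;> simp

@[simp]
lemma natTail_natCons (a : M) (f : ℕ →₀ M) : (natCons a f).natTail = f := by
  ext; simp

lemma natCons_inj {a b : M} {f g : ℕ →₀ M} : natCons a f = natCons b g ↔ a = b ∧ f = g := by
  refine ⟨fun h => ⟨by simpa using congr($h 0), by simpa using congrArg natTail h⟩, ?_⟩
  rintro ⟨rfl, rfl⟩
  rfl

lemma natCons_injective (a : M) : Function.Injective (natCons a) :=
  fun _ _ h => (natCons_inj.mp h).2

lemma pairwiseDisjoint_image_natCons {ι : Type*} {t : Set ι} {a : ι → M}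
    (ha : Function.Injective a) (S : ι → Set (ℕ →₀ M)) :
    t.PairwiseDisjoint fun i => natCons (a i) '' S i := by
  rintro i - j - hij
  refine Set.disjoint_left.mpr ?_
  rintro _ ⟨f, -, rfl⟩ ⟨g, -, hg⟩
  exact hij (ha (natCons_inj.mp hg).1).symm

end AddZeroClass

lemma sum_natCons [AddCommMonoid M] {N : Type*} [AddCommMonoid N] (a : M) (f : ℕ →₀ M)
    {g : ℕ → M → N} (hg : ∀ i, g i 0 = 0) :
    (natCons a f).sum g = g 0 a + f.sum fun i b => g (i + 1) b := by
  classical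
  have hdisj :
      Disjoint (single 0 a).support (f.embDomain ⟨Nat.succ, Nat.succ_injective⟩).support := by
    simp only [support_embDomain, Finset.disjoint_left, Finset.mem_map, mem_support_iff]
    rintro _ hi ⟨j, -, rfl⟩
    simp at hi
  rw [natCons, sum_add_index_of_disjoint hdisj, sum_single_index (hg 0), sum_embDomain]
  rfl

end Finsupp

open Finsupp

def rpSet (p M d : ℤ) : Set (ℕ →₀ ℤ) :=
  {m | (∀ i, 0 ≤ m i) ∧ (∀ i, m (i + 1) ≤ m i) ∧ m 0 ≤ d ∧ (m.sum fun i a => a * p ^ i) = M}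

lemma rp_eq_ncard (p M d : ℤ) : rp p M d = (rpSet p M d).ncard := rfl

lemma mul_pow_le_sum_mul_pow {p : ℤ} (hp : 0 ≤ p) {m : ℕ →₀ ℤ} (hm : ∀ i, 0 ≤ m i) (j : ℕ) :
    m j * p ^ j ≤ m.sum fun i a => a * p ^ i := by
  have hterm i : 0 ≤ m i * p ^ i := mul_nonneg (hm i) (pow_nonneg hp i)
  rcases eq_or_ne (m j) 0 with h | h
  · rw [h, zero_mul]
    exact Finset.sum_nonneg fun i _ => hterm i
  · exact Finset.single_le_sum (fun i _ => hterm i) (mem_support_iff.mpr h)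

lemma sum_natCons_mul_pow (p a : ℤ) (m : ℕ →₀ ℤ) :
    ((natCons a m).sum fun i b => b * p ^ i) = a + (m.sum fun i b => b * p ^ i) * p := by
  rw [sum_natCons _ _ fun _ => zero_mul _, Finsupp.sum_mul]
  simp [pow_succ, mul_assoc]

lemma finite_setOf_sum_mul_pow_eq {p : ℤ} (hp : 2 ≤ p) (M : ℤ) :
    {m : ℕ →₀ ℤ | (∀ i, 0 ≤ m i) ∧ (m.sum fun i a => a * p ^ i) = M}.Finite := by
  refine ((Finset.range M.toNat).finsupp fun _ => Finset.Icc 0 M).finite_toSet.subset ?_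
  rintro m ⟨hm, rfl⟩
  have hle := mul_pow_le_sum_mul_pow (p := p) (by omega) hm
  have hpow (j : ℕ) : (j : ℤ) < p ^ j := calc
    (j : ℤ) < 2 ^ j := by exact_mod_cast Nat.lt_two_pow_self
    _ ≤ p ^ j := pow_le_pow_left₀ (by norm_num) hp j
  rw [Finset.mem_coe, Finset.mem_finsupp_iff]
  refine ⟨fun j hj => ?_, fun j _ => ?_⟩
  · have hmj : 1 ≤ m j := by have := mem_support_iff.mp hj; have := hm j; omega
    have := le_mul_of_one_le_left (pow_nonneg (by omega : (0 : ℤ) ≤ p) j) hmj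
    have := hle j; have := hpow j
    simp only [Finset.mem_range]
    omega
  · have := le_mul_of_one_le_right (hm j) (one_le_pow₀ (by omega : (1 : ℤ) ≤ p) (n := j))
    have := hle j; have := hm j
    simp only [Finset.mem_Icc]
    omega

lemma rpSet_finite {p : ℤ} (hp : 2 ≤ p) (M d : ℤ) : (rpSet p M d).Finite :=
  (finite_setOf_sum_mul_pow_eq hp M).subset fun _ hm => ⟨hm.1, hm.2.2.2⟩

lemma natCons_mem_rpSet_iff {p M d a : ℤ} {m : ℕ →₀ ℤ} :
    natCons a m ∈ rpSet p M d ↔ 0 ≤ a ∧ a ≤ d ∧ ∃ N, a + N * p = M ∧ m ∈ rpSet p N a := by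
  simp only [rpSet, Set.mem_ofPred_eq, sum_natCons_mul_pow]
  constructor
  · rintro ⟨h0, h1, h2, h3⟩
    refine ⟨by simpa using h0 0, by simpa using h2, _, h3,
      fun i => by simpa using h0 (i + 1), fun i => by simpa using h1 (i + 1),
      by simpa using h1 0, rfl⟩
  · rintro ⟨ha0, had, N, rfl, hm0, hm1, hm2, rfl⟩
    refine ⟨?_, ?_, by simpa using had, rfl⟩ <;> rintro (_ | i) <;> simp [*]

lemma rpSet_eq_biUnion (p M d : ℤ) :
    rpSet p M d = ⋃ N ∈ {N : ℤ | M - d ≤ N * p ∧ N * p ≤ M},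
      natCons (M - N * p) '' rpSet p N (M - N * p) := by
  ext m
  obtain ⟨a, f, rfl⟩ : ∃ a f, natCons a f = m := ⟨_, _, natCons_natTail m⟩
  simp only [natCons_mem_rpSet_iff, Set.mem_iUnion, Set.mem_image, natCons_inj,
    Set.mem_ofPred_eq, exists_prop]
  constructor
  · rintro ⟨ha0, had, N, rfl, hf⟩
    exact ⟨N, ⟨by omega, by omega⟩, f, by rwa [add_sub_cancel_right], by ring, rfl⟩
  · rintro ⟨N, ⟨hNd, hNM⟩, f, hf, rfl, rfl⟩
    exact ⟨by omega, by omega, N, by ring, hf⟩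

lemma coe_Icc_ceil_div_floor_div {a b p : ℤ} (hp : 0 < p) :
    (Finset.Icc ⌈(a : ℚ) / p⌉ ⌊(b : ℚ) / p⌋ : Set ℤ) = {N | a ≤ N * p ∧ N * p ≤ b} := by
  ext N
  have hpQ : (0 : ℚ) < p := by exact_mod_cast hp
  simp only [Finset.coe_Icc, Set.mem_Icc, Set.mem_ofPred_eq, Int.ceil_le, Int.le_floor,
    div_le_iff₀ hpQ, le_div_iff₀ hpQ]
  norm_cast

/-- `r_p(M,d) = Σ_{(M−d)/p ≤ N ≤ M/p} r_p(N, M − N·p)`. -/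
theorem stmt_2 (p : ℤ) (hp : 2 ≤ p) (M d : ℕ) :
    rp p M d =
      ∑ N ∈ Finset.Icc ⌈((M : ℚ) - (d : ℚ)) / (p : ℚ)⌉ ⌊(M : ℚ) / (p : ℚ)⌋,
        rp p N ((M : ℤ) - N * p) := by
  have hrange := coe_Icc_ceil_div_floor_div (a := (M : ℤ) - d) (b := M) (by omega : 0 < p)
  simp only [Int.cast_sub, Int.cast_natCast] at hrange
  rw [rp_eq_ncard, rpSet_eq_biUnion, ← hrange, (Finset.finite_toSet _).ncard_biUnion,
    finsum_mem_coe_finset]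
  · exact Finset.sum_congr rfl fun N _ => Set.ncard_image_of_injective _ (natCons_injective _)
  · exact fun N _ => (rpSet_finite hp _ _).image _
  · exact pairwiseDisjoint_image_natCons
      (fun N N' h => mul_right_cancel₀ (by omega : p ≠ 0) (by simpa using h)) _
end

section
/- Define Z_p(d) = max over integers M of r_p(M,d). Then for every integer d ≥ 1, Z_p(d) ≤ 1 + (log_p(d) + 2) · Σ_{f=0}^{d−1} Z_p(f). -/
/-- `Z_p(d) = max_M r_p(M,d)`. -/
noncomputable def Zp (p : ℤ) (d : ℤ) : ℕ :=
  sSup {n : ℕ | ∃ M : ℤ, rp p M d = n}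

/-!
A sequence counted by `r_p(M, d)` is positive exactly on an initial segment `{0, …, k - 1}`, and
then `1 + p + ⋯ + p^(k-1) ≤ M ≤ d (1 + p + ⋯ + p^(k-1))`. Since `p^(k-1) ≤ 1 + ⋯ + p^(k-1) < p^k`,
only `⌊log_p d⌋ + 2` consecutive values of `k` are possible. For fixed `k`, subtracting `1` from
every positive term is an injection into the sequences counted by
`r_p(M - (1 + ⋯ + p^(k-1)), d - 1)`. Hence `Z_p(d) ≤ (⌊log_p d⌋ + 2) Z_p(d - 1)`, which is
stronger than the claim; finiteness of `Z_p(d)` follows from the same bound by induction on `d`.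
-/

open Finset

def digitSeqs (p M d : ℤ) : Set (ℕ →₀ ℤ) :=
  {m | (∀ i, 0 ≤ m i) ∧ (∀ i, m (i + 1) ≤ m i) ∧ m 0 ≤ d ∧
    (m.sum fun i a => a * p ^ i) = M}

theorem rp_eq_ncard_digitSeqs (p M d : ℤ) : rp p M d = (digitSeqs p M d).ncard := rfl

def repunit (p k : ℕ) : ℕ := ∑ i ∈ range k, p ^ i

section Repunit

variable {p : ℕ}

theorem pow_pred_le_repunit {k : ℕ} (hk : k ≠ 0) : p ^ (k - 1) ≤ repunit p k :=
  single_le_sum (f := (p ^ ·)) (fun _ _ => Nat.zero_le _) (mem_range.2 (by omega))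

theorem repunit_lt_pow (hp : 2 ≤ p) (k : ℕ) : repunit p k < p ^ k :=
  Nat.geomSum_lt hp fun _ => mem_range.1

theorem le_repunit (hp : 1 ≤ p) (k : ℕ) : k ≤ repunit p k := by
  simpa [repunit] using card_nsmul_le_sum (range k) (p ^ ·) 1 fun _ _ => Nat.one_le_pow _ _ hp

theorem le_add_log_of_repunit_le (hp : 2 ≤ p) {j k d : ℕ}
    (h : repunit p j ≤ d * repunit p k) : j ≤ k + Nat.log p d + 1 := by
  by_contra! hjk
  have hpow : p ^ (j - 1 - k) * p ^ k ≤ d * p ^ k := by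
    rw [← pow_add, show j - 1 - k + k = j - 1 by omega]
    exact (pow_pred_le_repunit (by omega)).trans (h.trans (Nat.mul_le_mul_left d
      (repunit_lt_pow hp k).le))
  have := Nat.le_log_of_pow_le (by omega) (Nat.le_of_mul_le_mul_right hpow (by positivity))
  omega

end Repunit

theorem Finset.card_le_of_forall_le_add {K : Finset ℕ} {L : ℕ}
    (h : ∀ j ∈ K, ∀ k ∈ K, j ≤ k + L + 1) : #K ≤ L + 2 := by
  rcases K.eq_empty_or_nonempty with rfl | hK
  · simp
  calc #K ≤ #(Icc (K.min' hK) (K.min' hK + L + 1)) :=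
        card_le_card fun j hj => mem_Icc.2 ⟨min'_le K j hj, h j hj _ (min'_mem K hK)⟩
    _ = L + 2 := by simp; omega

namespace digitSeqs

variable {p M d : ℤ} {m : ℕ →₀ ℤ}

theorem antitone (hm : m ∈ digitSeqs p M d) : Antitone m :=
  antitone_nat_of_succ_le hm.2.1

theorem apply_le (hm : m ∈ digitSeqs p M d) (i : ℕ) : m i ≤ d :=
  (digitSeqs.antitone hm (Nat.zero_le i)).trans hm.2.2.1

theorem exists_support_eq_range (hm : m ∈ digitSeqs p M d) : ∃ k, m.support = range k := by
  classical
  have hzero : ∃ i, m i = 0 := by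
    obtain ⟨i, hi⟩ := Infinite.exists_notMem_finset m.support
    exact ⟨i, Finsupp.notMem_support_iff.1 hi⟩
  refine ⟨Nat.find hzero, Finset.ext fun i => ?_⟩
  rw [Finsupp.mem_support_iff, mem_range]
  constructor
  · intro hi
    by_contra! hle
    exact hi (le_antisymm ((digitSeqs.antitone hm hle).trans (Nat.find_spec hzero).le) (hm.1 i))
  · exact Nat.find_min hzero

theorem support_eq_range_card (hm : m ∈ digitSeqs p M d) : m.support = range #m.support := by
  obtain ⟨k, hk⟩ := digitSeqs.exists_support_eq_range hm
  rw [hk, card_range]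

theorem one_le_apply_of_lt_card (hm : m ∈ digitSeqs p M d) {i : ℕ} (hi : i < #m.support) :
    1 ≤ m i := by
  rw [← mem_range, ← digitSeqs.support_eq_range_card hm, Finsupp.mem_support_iff] at hi
  have := hm.1 i
  omega

theorem sum_range_card_support (hm : m ∈ digitSeqs p M d) :
    ∑ i ∈ range #m.support, m i * p ^ i = M := by
  rw [← hm.2.2.2, Finsupp.sum, ← digitSeqs.support_eq_range_card hm]

variable {p : ℕ}

theorem repunit_card_support_le (hm : m ∈ digitSeqs p M d) :
    (repunit p #m.support : ℤ) ≤ M := by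
  rw [← digitSeqs.sum_range_card_support hm, repunit]
  push_cast
  exact sum_le_sum fun i hi =>
    le_mul_of_one_le_left (by positivity) (digitSeqs.one_le_apply_of_lt_card hm (mem_range.1 hi))

theorem le_mul_repunit_card_support (hm : m ∈ digitSeqs p M d) :
    M ≤ d * repunit p #m.support := by
  rw [← digitSeqs.sum_range_card_support hm, repunit]
  push_cast
  rw [mul_sum]
  exact sum_le_sum fun i _ => mul_le_mul_of_nonneg_right (digitSeqs.apply_le hm i) (by positivity)

end digitSeqs

theorem digitSeqs_finite {p : ℕ} (hp : 1 ≤ p) (M d : ℤ) : (digitSeqs p M d).Finite := by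
  refine ((range (M.toNat + 1)).finsupp fun _ => Icc 0 d).finite_toSet.subset fun m hm => ?_
  rw [mem_coe, mem_finsupp_iff]
  refine ⟨fun i hi => ?_, fun i _ => mem_Icc.2 ⟨hm.1 i, digitSeqs.apply_le hm i⟩⟩
  have hcard : (#m.support : ℤ) ≤ M :=
    (Nat.cast_le.2 (le_repunit hp _)).trans (digitSeqs.repunit_card_support_le hm)
  rw [digitSeqs.support_eq_range_card hm, mem_range] at hi
  rw [mem_range]
  omega

noncomputable def decrement (m : ℕ →₀ ℤ) : ℕ →₀ ℤ :=
  m.mapRange (fun a => max (a - 1) 0) (by simp)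

theorem decrement_apply (m : ℕ →₀ ℤ) (i : ℕ) : decrement m i = max (m i - 1) 0 :=
  Finsupp.mapRange_apply ..

theorem decrement_injOn (s : Finset ℕ) :
    Set.InjOn decrement {m | (∀ i, 0 ≤ m i) ∧ m.support = s} := by
  rintro m₁ ⟨hm₁, hs₁⟩ m₂ ⟨hm₂, hs₂⟩ h
  ext i
  have hi := DFunLike.congr_fun h i
  rw [decrement_apply, decrement_apply] at hi
  by_cases his : i ∈ s
  · have h₁ := (hm₁ i).lt_of_ne' (Finsupp.mem_support_iff.1 (hs₁ ▸ his))
    have h₂ := (hm₂ i).lt_of_ne' (Finsupp.mem_support_iff.1 (hs₂ ▸ his))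
    omega
  · rw [Finsupp.notMem_support_iff.1 (hs₁ ▸ his), Finsupp.notMem_support_iff.1 (hs₂ ▸ his)]

theorem decrement_mem_digitSeqs {p : ℕ} {M d : ℤ} (hd : 0 ≤ d) {m : ℕ →₀ ℤ}
    (hm : m ∈ digitSeqs p M (d + 1)) :
    decrement m ∈ digitSeqs p (M - repunit p #m.support) d := by
  have hsub : (decrement m).support ⊆ range #m.support := by
    rw [← digitSeqs.support_eq_range_card hm]
    exact Finsupp.support_mapRange
  have hlt : ∀ i ∈ range #m.support, decrement m i = m i - 1 := fun i hi => by
    have := digitSeqs.one_le_apply_of_lt_card hm (mem_range.1 hi)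
    rw [decrement_apply]
    omega
  refine ⟨fun i => by simp [decrement_apply], fun i => ?_, ?_, ?_⟩
  · simp only [decrement_apply]
    exact max_le_max (by linarith [hm.2.1 i]) le_rfl
  · rw [decrement_apply]
    exact max_le (by linarith [hm.2.2.1]) hd
  · rw [Finsupp.sum_of_support_subset _ hsub _ (by simp), ← digitSeqs.sum_range_card_support hm,
      repunit, Nat.cast_sum, ← sum_sub_distrib]
    refine sum_congr rfl fun i hi => ?_
    rw [hlt i hi]
    push_cast
    ring

theorem rp_succ_le {p : ℕ} (hp : 2 ≤ p) {d Z : ℕ} (hZ : ∀ M, rp p M d ≤ Z) (M : ℤ) :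
    rp p M (d + 1) ≤ (Nat.log p (d + 1) + 2) * Z := by
  classical
  have hfin := digitSeqs_finite (by omega : 1 ≤ p) M (d + 1)
  rw [rp_eq_ncard_digitSeqs, Set.ncard_eq_toFinset_card _ hfin]
  set F := hfin.toFinset with hFdef
  have hF : ∀ m ∈ F, m ∈ digitSeqs p M (d + 1) := fun m => hfin.mem_toFinset.1
  have hfiber (k : ℕ) : #{m ∈ F | #m.support = k} ≤ Z :=
    calc #{m ∈ F | #m.support = k} = {m ∈ digitSeqs p M (d + 1) | #m.support = k}.ncard := by
          rw [← Set.ncard_coe_finset, coe_filter]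
          simp only [hFdef, Set.Finite.mem_toFinset]
      _ ≤ rp p (M - repunit p k) d :=
          Set.ncard_le_ncard_of_injOn decrement
            (fun m hm => hm.2 ▸ decrement_mem_digitSeqs (Nat.cast_nonneg d) hm.1)
            ((decrement_injOn (range k)).mono fun m hm =>
              show _ ∧ _ from ⟨hm.1.1, hm.2 ▸ digitSeqs.support_eq_range_card hm.1⟩)
            (digitSeqs_finite (by omega) _ _)
      _ ≤ Z := hZ _
  have himage : #(F.image (#·.support)) ≤ Nat.log p (d + 1) + 2 := by
    refine card_le_of_forall_le_add ?_
    simp only [mem_image]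
    rintro _ ⟨m₁, hm₁, rfl⟩ _ ⟨m₂, hm₂, rfl⟩
    refine le_add_log_of_repunit_le hp ?_
    exact_mod_cast (digitSeqs.repunit_card_support_le (hF m₁ hm₁)).trans
      (digitSeqs.le_mul_repunit_card_support (hF m₂ hm₂))
  calc #F ≤ Z * #(F.image (#·.support)) := card_le_mul_card_image F Z fun k _ => hfiber k
    _ ≤ (Nat.log p (d + 1) + 2) * Z := by rw [mul_comm]; gcongr

theorem rp_zero_le_one (p M : ℤ) : rp p M 0 ≤ 1 := by
  have hzero : digitSeqs p M 0 ⊆ {0} := fun m hm =>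
    Finsupp.ext fun i => le_antisymm (digitSeqs.apply_le hm i) (hm.1 i)
  rw [rp_eq_ncard_digitSeqs, ← Set.ncard_singleton (0 : ℕ →₀ ℤ)]
  exact Set.ncard_le_ncard hzero

theorem bddAbove_range_rp {p : ℕ} (hp : 2 ≤ p) (d : ℕ) :
    BddAbove (Set.range fun M => rp p M d) := by
  induction d with
  | zero => exact ⟨1, by rintro _ ⟨M, rfl⟩; exact rp_zero_le_one p M⟩
  | succ d ih =>
    obtain ⟨Z, hZ⟩ := ih
    refine ⟨(Nat.log p (d + 1) + 2) * Z, ?_⟩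
    rintro _ ⟨M, rfl⟩
    push_cast
    exact rp_succ_le hp (fun M => hZ ⟨M, rfl⟩) M

theorem rp_le_Zp {p : ℕ} (hp : 2 ≤ p) (M : ℤ) (d : ℕ) : rp p M d ≤ Zp p d :=
  le_csSup (bddAbove_range_rp hp d) ⟨M, rfl⟩

theorem Zp_succ_le {p : ℕ} (hp : 2 ≤ p) (d : ℕ) :
    Zp p (d + 1 : ℕ) ≤ (Nat.log p (d + 1) + 2) * Zp p d := by
  refine csSup_le ⟨_, 0, rfl⟩ ?_
  rintro _ ⟨M, rfl⟩
  push_cast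
  exact rp_succ_le hp (rp_le_Zp hp · d) M

/-- `Z_p(d) ≤ 1 + (log_p d + 2) · Σ_{f=0}^{d−1} Z_p(f)` for `d ≥ 1`. -/
theorem stmt_6 (p : ℕ) (hp : p.Prime) (d : ℕ) (hd : 1 ≤ d) :
    (Zp p d : ℝ) ≤ 1 + (Real.logb p d + 2) * ∑ f ∈ Finset.range d, (Zp p f : ℝ) := by
  obtain ⟨e, rfl⟩ : ∃ e, d = e + 1 := ⟨d - 1, by omega⟩
  calc (Zp p (e + 1 : ℕ) : ℝ) ≤ (Nat.log p (e + 1) + 2) * (Zp p e : ℝ) := by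
        exact_mod_cast Zp_succ_le hp.two_le e
    _ ≤ (Real.logb p (e + 1 : ℕ) + 2) * ∑ f ∈ range (e + 1), (Zp p f : ℝ) := by
        gcongr (?_ + _) * ?_
        · exact add_nonneg ((Nat.cast_nonneg _).trans (Real.natLog_le_logb _ _)) zero_le_two
        · exact Real.natLog_le_logb _ _
        · exact single_le_sum (f := fun f : ℕ => (Zp p f : ℝ)) (fun _ _ => by positivity)
            (self_mem_range_succ e)
    _ ≤ _ := le_add_of_nonneg_left zero_le_one
end

section
/- For every prime p and every integer d ≥ 0, Z_p(d) ≤ (log_p(d+1) + 3)^d, where Z_p(d) = max_M r_p(M,d). -/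
/-!
Encode a partition `m` with parts `≤ d` by its conjugate `c : Fin d → ℕ`, `c v = #{i | v < m i}`.
Then `∑ v, p ^ c v = (p - 1) M + d`, so it suffices to count antitone `c` with a prescribed
value of `∑ v, p ^ c v`. Such a `c` is recovered, coordinate by coordinate, from the excesses
`log_p (∑_{w ≥ v} p ^ c w) - c v`, each of which lies in `[0, log_p d]` because the tail sum
is at most `d p ^ c v` for antitone `c`; hence there are at most
`(⌊log_p d⌋ + 1) ^ d` of them, which is below `(log_p (d + 1) + 3) ^ d`.
-/

open Finset

section PowerSums

variable {p d : ℕ}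

def tailPowSum (p : ℕ) {d : ℕ} (c : Fin d → ℕ) (v : Fin d) : ℕ :=
  ∑ w with v ≤ w, p ^ c w

def logExcess (p : ℕ) {d : ℕ} (c : Fin d → ℕ) (v : Fin d) : ℕ :=
  Nat.log p (tailPowSum p c v) - c v

lemma le_log_tailPowSum (hp : 1 < p) (c : Fin d → ℕ) (v : Fin d) :
    c v ≤ Nat.log p (tailPowSum p c v) :=
  Nat.le_log_of_pow_le hp <|
    single_le_sum (f := fun w => p ^ c w) (fun _ _ => Nat.zero_le _) (by simp)

lemma tailPowSum_le (hp : 1 ≤ p) {c : Fin d → ℕ} (hc : Antitone c) (v : Fin d) :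
    tailPowSum p c v ≤ d * p ^ c v :=
  calc tailPowSum p c v ≤ #{w | v ≤ w} • p ^ c v :=
        sum_le_card_nsmul _ _ _ fun w hw => Nat.pow_le_pow_right hp (hc (mem_filter.mp hw).2)
    _ ≤ d * p ^ c v := by
        rw [smul_eq_mul]
        exact Nat.mul_le_mul_right _ ((card_filter_le _ _).trans_eq (card_fin d))

lemma logExcess_le (hp : 1 ≤ p) {c : Fin d → ℕ} (hc : Antitone c) (v : Fin d) :
    logExcess p c v ≤ Nat.log p d := by
  rw [logExcess, ← Nat.log_div_base_pow]
  exact Nat.log_mono_right (Nat.div_le_of_le_mul (mul_comm d _ ▸ tailPowSum_le hp hc v))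

lemma sum_filter_lt_add_tailPowSum (c : Fin d → ℕ) (v : Fin d) :
    ∑ w with w < v, p ^ c w + tailPowSum p c v = ∑ w, p ^ c w := by
  unfold tailPowSum
  simpa only [not_lt] using sum_filter_add_sum_filter_not univ (· < v) fun w => p ^ c w

/-- Going up from `v = 0`, the tail sum at `v` is known from the total and the earlier
coordinates, and then `c v = log_p (tail sum) - logExcess`. -/
lemma eq_of_sum_pow_eq_of_logExcess_eq (hp : 1 < p) {c c' : Fin d → ℕ}
    (hsum : ∑ v, p ^ c v = ∑ v, p ^ c' v) (hex : logExcess p c = logExcess p c') : c = c' := by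
  funext v
  induction v using WellFoundedLT.induction with
  | _ v ih =>
    have hhead : ∑ w with w < v, p ^ c w = ∑ w with w < v, p ^ c' w :=
      sum_congr rfl fun w hw => by rw [ih w (mem_filter.mp hw).2]
    have htail : tailPowSum p c v = tailPowSum p c' v := by
      have := sum_filter_lt_add_tailPowSum (p := p) c v
      have := sum_filter_lt_add_tailPowSum (p := p) c' v
      omega
    have hexv := congrFun hex v
    have hle := le_log_tailPowSum hp c v
    have hle' := le_log_tailPowSum hp c' v
    simp only [logExcess, htail] at hexv hle
    omega

lemma finite_setOf_sum_pow_eq (hp : 1 < p) (T : ℕ) :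
    {c : Fin d → ℕ | ∑ v, p ^ c v = T}.Finite :=
  (Set.finite_Iic fun _ => T).subset fun c hc v =>
    ((Nat.lt_pow_self hp).trans_le
      (hc ▸ single_le_sum (f := fun w => p ^ c w) (fun _ _ => Nat.zero_le _) (mem_univ v))).le

lemma ncard_antitone_sum_pow_eq_le (hp : 1 < p) (T : ℕ) :
    {c : Fin d → ℕ | Antitone c ∧ ∑ v, p ^ c v = T}.ncard ≤ (Nat.log p d + 1) ^ d := by
  calc _ ≤ ((Iic fun _ : Fin d => Nat.log p d : Finset (Fin d → ℕ)) : Set (Fin d → ℕ)).ncard :=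
        Set.ncard_le_ncard_of_injOn (logExcess p)
          (fun c hc => mem_coe.mpr (mem_Iic.mpr (logExcess_le hp.le hc.1)))
          (fun c hc c' hc' h => eq_of_sum_pow_eq_of_logExcess_eq hp (hc.2.trans hc'.2.symm) h)
          (finite_toSet _)
    _ = (Nat.log p d + 1) ^ d := by simp only [Set.ncard_coe_finset, Pi.card_Iic]; simp

end PowerSums

section Conjugate

variable {m : ℕ →₀ ℤ} {d : ℕ}

def conjugate (m : ℕ →₀ ℤ) (d : ℕ) (v : Fin d) : ℕ :=
  #{i ∈ m.support | (v : ℤ) < m i}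

lemma antitone_conjugate (m : ℕ →₀ ℤ) (d : ℕ) : Antitone (conjugate m d) := fun v w hvw =>
  card_le_card <| monotone_filter_right _ fun i _ h =>
    lt_of_le_of_lt (by exact_mod_cast hvw) h

lemma lt_conjugate_iff (hm : Antitone m) (v : Fin d) (i : ℕ) :
    i < conjugate m d v ↔ (v : ℤ) < m i := by
  constructor
  · contrapose!
    intro hmi
    calc conjugate m d v ≤ #(range i) := card_le_card fun j hj => mem_range.mpr <|
          lt_of_not_ge fun hij => (mem_filter.mp hj).2.not_ge ((hm hij).trans hmi)
      _ = i := card_range i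
  · intro hmi
    calc i < #(range (i + 1)) := by simp
      _ ≤ conjugate m d v := card_le_card fun j hj => by
          have hmj : (v : ℤ) < m j := hmi.trans_le (hm (Nat.lt_succ_iff.mp (mem_range.mp hj)))
          exact mem_filter.mpr ⟨Finsupp.mem_support_iff.mpr (by omega), hmj⟩

lemma filter_support_eq_range_conjugate (hm : Antitone m) (v : Fin d) :
    {i ∈ m.support | (v : ℤ) < m i} = range (conjugate m d v) := by
  ext i
  rw [mem_filter, mem_range, lt_conjugate_iff hm, Finsupp.mem_support_iff, and_iff_right_iff_imp]
  intro h
  omega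

lemma card_fin_intCast_lt {a : ℤ} (h0 : 0 ≤ a) (hd : a ≤ d) :
    (#{v : Fin d | (v : ℤ) < a} : ℤ) = a := by
  have : ∀ v : Fin d, (v : ℤ) < a ↔ (v : ℕ) < a.toNat := fun v => by omega
  simp only [this, Fin.card_filter_val_lt]
  omega

lemma conjugate_injOn :
    Set.InjOn (conjugate · d) {m | Antitone m ∧ (∀ i, 0 ≤ m i) ∧ ∀ i, m i ≤ d} := by
  rintro m ⟨hm, hm0, hmd⟩ m' ⟨hm', hm0', hmd'⟩ (h : conjugate m d = conjugate m' d)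
  ext i
  rw [← card_fin_intCast_lt (hm0 i) (hmd i), ← card_fin_intCast_lt (hm0' i) (hmd' i)]
  simp only [← lt_conjugate_iff hm, ← lt_conjugate_iff hm', h]

lemma sum_pow_conjugate (p : ℤ) (hm : Antitone m) (hm0 : ∀ i, 0 ≤ m i) (hmd : ∀ i, m i ≤ d) :
    ∑ v, p ^ conjugate m d v = (p - 1) * (m.sum fun i a => a * p ^ i) + d :=
  calc ∑ v, p ^ conjugate m d v
        = ∑ v : Fin d, ((p - 1) * ∑ i ∈ range (conjugate m d v), p ^ i + 1) := by
        simp only [mul_comm (p - 1), geom_sum_mul, sub_add_cancel]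
    _ = (p - 1) * ∑ v : Fin d, ∑ i ∈ m.support with (v : ℤ) < m i, p ^ i + d := by
        simp [sum_add_distrib, mul_sum, filter_support_eq_range_conjugate hm]
    _ = (p - 1) * (m.sum fun i a => a * p ^ i) + d := by
        rw [sum_comm' (t' := m.support) (s' := fun i => {v : Fin d | (v : ℤ) < m i})
          (by simp [and_comm])]
        simp only [sum_const, nsmul_eq_mul, Finsupp.sum, card_fin_intCast_lt (hm0 _) (hmd _)]

end Conjugate

lemma rp_le_pow_log {p : ℕ} (hp : 1 < p) (M : ℤ) (d : ℕ) :
    rp p M d ≤ (Nat.log p d + 1) ^ d := by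
  have hbound : ∀ m : ℕ →₀ ℤ, (∀ i, m (i + 1) ≤ m i) → m 0 ≤ d → ∀ i, m i ≤ d :=
    fun m hmono hmd i => (antitone_nat_of_succ_le hmono (Nat.zero_le i)).trans hmd
  set T := ((p - 1) * M + d : ℤ).toNat with hT
  calc rp p M d ≤ {c : Fin d → ℕ | Antitone c ∧ ∑ v, p ^ c v = T}.ncard := by
        refine Set.ncard_le_ncard_of_injOn (conjugate · d) ?_
          (conjugate_injOn.mono <| by
            rintro m ⟨hm0, hmono, hmd, -⟩
            exact ⟨antitone_nat_of_succ_le hmono, hm0, hbound m hmono hmd⟩)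
          ((finite_setOf_sum_pow_eq hp T).subset fun c hc => hc.2)
        rintro m ⟨hm0, hmono, hmd, hM⟩
        refine ⟨antitone_conjugate m d, ?_⟩
        have hsum : ((∑ v, p ^ conjugate m d v : ℕ) : ℤ) = (p - 1) * M + d := by
          push_cast
          rw [sum_pow_conjugate _ (antitone_nat_of_succ_le hmono) hm0 (hbound m hmono hmd), hM]
        rw [hT, ← hsum, Int.toNat_natCast]
    _ ≤ (Nat.log p d + 1) ^ d := ncard_antitone_sum_pow_eq_le hp T

lemma Zp_le_pow_log {p : ℕ} (hp : 1 < p) (d : ℕ) : Zp p d ≤ (Nat.log p d + 1) ^ d :=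
  csSup_le ⟨_, 0, rfl⟩ fun _ ⟨M, hM⟩ => hM ▸ rp_le_pow_log hp M d

/-- `Z_p(d) ≤ (log_p(d+1) + 3)^d` for every `d ≥ 0`. -/
theorem stmt_7 (p : ℕ) (hp : p.Prime) (d : ℕ) :
    (Zp p d : ℝ) ≤ (Real.logb p (d + 1) + 3) ^ d := by
  have hlog : (Nat.log p d : ℝ) ≤ Real.logb p (d + 1) :=
    calc (Nat.log p d : ℝ) ≤ Nat.log p (d + 1) := by exact_mod_cast Nat.log_mono_right (by omega)
      _ ≤ Real.logb p (d + 1) := by exact_mod_cast Real.natLog_le_logb (d + 1) p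
  calc (Zp p d : ℝ) ≤ ((Nat.log p d + 1 : ℕ) : ℝ) ^ d := by
        exact_mod_cast Zp_le_pow_log hp.one_lt d
    _ ≤ (Real.logb p (d + 1) + 3) ^ d := pow_le_pow_left₀ (by positivity) (by push_cast; linarith) d
end

section
/- For integers q ≥ 2 and real x with x ≥ q, the function F_q(x) = Σ_{n≥0} x^n/(n!·q^{n(n+1)/2}) satisfies F_q(x) ≤ e·q^{1/8}·x^{(log_q(x)−1)/2}. -/
/-!
Writing `x = q ^ t`, the `n`-th term without its factorial is `q ^ (t n - n (n + 1) / 2)`, and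
completing the square gives `t n - n (n + 1) / 2 ≤ 1 / 8 + t (t - 1) / 2`, with equality at
`n = t - 1 / 2`. Each term is thus at most `q ^ (1 / 8) x ^ ((log_q x - 1) / 2) / n!`, and summing
over `n` produces the factor `e = ∑ 1 / n!`.
-/

/-- `F_q(x) = Σ_{n≥0} x^n/(n!·q^{n(n+1)/2})`. -/
noncomputable def Fq (q : ℕ) (x : ℝ) : ℝ :=
  ∑' n : ℕ, x ^ n / (n.factorial * (q : ℝ) ^ (n * (n + 1) / 2))

open Real Nat

lemma Nat.cast_mul_succ_div_two {K : Type*} [Field K] [CharZero K] (n : ℕ) :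
    ((n * (n + 1) / 2 : ℕ) : K) = n * (n + 1) / 2 := by
  rw [Nat.cast_div (Nat.even_mul_succ_self n).two_dvd two_ne_zero]
  push_cast
  ring

lemma Real.rpow_div_rpow_triangle_le {q x : ℝ} (hq : 1 < q) (hx : 0 < x) (y : ℝ) :
    x ^ y / q ^ (y * (y + 1) / 2) ≤ q ^ ((1 : ℝ) / 8) * x ^ ((logb q x - 1) / 2) := by
  have hq0 : 0 < q := zero_lt_one.trans hq
  obtain ⟨t, rfl⟩ : ∃ t, q ^ t = x := ⟨logb q x, rpow_logb hq0 hq.ne' hx⟩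
  rw [logb_rpow hq0 hq.ne', ← rpow_mul hq0.le, ← rpow_mul hq0.le, ← rpow_sub hq0,
    ← rpow_add hq0]
  exact rpow_le_rpow_of_exponent_le hq.le (by nlinarith [sq_nonneg (y - t + 1 / 2)])

lemma Real.pow_div_pow_triangle_le {q x : ℝ} (hq : 1 < q) (hx : 0 < x) (n : ℕ) :
    x ^ n / q ^ (n * (n + 1) / 2) ≤ q ^ ((1 : ℝ) / 8) * x ^ ((logb q x - 1) / 2) := by
  have h := rpow_div_rpow_triangle_le hq hx n
  rwa [← Nat.cast_mul_succ_div_two, rpow_natCast, rpow_natCast] at h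

lemma Real.tsum_le_mul_exp_one {f : ℕ → ℝ} {M : ℝ} (hf₀ : ∀ n, 0 ≤ f n)
    (hf : ∀ n, f n ≤ M / n !) : ∑' n, f n ≤ M * exp 1 := by
  have hexp : HasSum (fun n : ℕ => M / n !) (M * exp 1) := by
    simpa [exp_eq_exp_ℝ, div_eq_mul_inv] using
      (NormedSpace.expSeries_div_hasSum_exp (1 : ℝ)).mul_left M
  exact hasSum_le hf (Summable.of_nonneg_of_le hf₀ hf hexp.summable).hasSum hexp

/-- for `q ≥ 2` and `x ≥ q`,
`F_q(x) ≤ e·q^{1/8}·x^{(log_q(x)−1)/2}`. -/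
theorem stmt_10 (q : ℕ) (hq : 2 ≤ q) (x : ℝ) (hx : (q : ℝ) ≤ x) :
    Fq q x ≤ Real.exp 1 * (q : ℝ) ^ ((1 : ℝ) / 8) * x ^ ((Real.logb q x - 1) / 2) := by
  have hq₁ : (1 : ℝ) < q := by exact_mod_cast hq
  have hx₀ : 0 < x := by linarith
  calc Fq q x ≤ ((q : ℝ) ^ ((1 : ℝ) / 8) * x ^ ((logb q x - 1) / 2)) * exp 1 :=
        tsum_le_mul_exp_one (fun n => by positivity) fun n => by
          rw [mul_comm, ← div_div]
          exact div_le_div_of_nonneg_right (pow_div_pow_triangle_le hq₁ hx₀ n) (by positivity)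
    _ = _ := by ring
end

section
/- For any prime p and integer d ≥ 1, the maximum Z_p(d) := max_M r_p(M,d) satisfies Z_p(d) ≥ C_1 · d^{(log_{p+1}(d)−3)/2} / Γ(log_{p+1}(d)+1), where C_1 = (1/2)·∏_{j=1}^∞ (1 − 1/((p+1)^j + 1)). -/
/-- `C_1 = (1/2)·∏_{j=1}^∞ (1 − 1/((p+1)^j + 1))`. -/
noncomputable def C1 (p : ℕ) : ℝ :=
  (1 / 2) * ∏' j : ℕ, (1 - 1 / (((p : ℝ) + 1) ^ (j + 1) + 1))

/-!
Write `R n = 1 + p + ⋯ + p^(n-1)`. The value `Σ m_i p^i` is additive in `m`, and the indicator of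
`[0, n]` has value `R (n + 1)`. Hence for `x_j ∈ [0, t_j]` (`j < K`) with `Σ t_j R (j + 2) ≤ d`,
the sequence `(d - Σ x_j R (j + 2)) e_0 + Σ x_j 1_[0, j+1]` is counted by `r_p(d, d)`, and distinct
`x` give distinct sequences, so `r_p(d, d) ≥ ∏ (t_j + 1)`. With `K = ⌊log_{p+1} d⌋` and
`t_j = ⌊d / (K (p+1)^(j+1))⌋` the product is at least `d^K / (K^K (p+1)^(K(K+1)/2))`, and this beats
the claimed bound by `K^K ≤ e^K K!`, `K! ≤ 2 Γ(log_{p+1} d + 1)` and `C_1 ≤ 1/2`.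

`Z_p(d) ≥ r_p(d, d)` needs `r_p(M, d)` to be bounded in `M`. Removing the top block `m_n 1_[0, n]`
of a sequence counted by `r_p(M, d)` leaves one counted by `r_p(M', d - 1)`, and
`R (n + 1) ≤ M ≤ d R (n + 1)`; since `R` at least doubles at each step, this leaves at most `d`
possible `n`, and induction on `d` gives a bound independent of `M`.
-/

open Finset Real
open scoped Nat

namespace RepunitPartition

variable {p : ℤ}

noncomputable def value (p : ℤ) : (ℕ →₀ ℤ) →+ ℤ :=
  Finsupp.liftAddHom fun i => AddMonoidHom.mulRight (p ^ i)

lemma value_single (p : ℤ) (i : ℕ) (a : ℤ) : value p (Finsupp.single i a) = a * p ^ i := by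
  simp [value]

lemma value_nonneg (hp : 0 ≤ p) {m : ℕ →₀ ℤ} (hm : ∀ i, 0 ≤ m i) : 0 ≤ value p m :=
  sum_nonneg fun i _ => mul_nonneg (hm i) (pow_nonneg hp i)

def rpSet (p M d : ℤ) : Set (ℕ →₀ ℤ) :=
  {m | (∀ i, 0 ≤ m i) ∧ (∀ i, m (i + 1) ≤ m i) ∧ m 0 ≤ d ∧ value p m = M}

lemma rp_eq_ncard (p M d : ℤ) : rp p M d = (rpSet p M d).ncard := rfl

def repunit (p : ℤ) (n : ℕ) : ℤ := ∑ i ∈ range n, p ^ i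

lemma repunit_succ (p : ℤ) (n : ℕ) : repunit p (n + 1) = repunit p n + p ^ n :=
  sum_range_succ _ _

lemma one_le_repunit_succ (hp : 0 ≤ p) (n : ℕ) : 1 ≤ repunit p (n + 1) := by
  rw [repunit, sum_range_succ']
  simpa using sum_nonneg fun i _ => pow_nonneg hp (i + 1)

lemma repunit_le_pow (hp : 2 ≤ p) (n : ℕ) : repunit p n ≤ p ^ n := by
  induction n with
  | zero => simp [repunit]
  | succ n ih => rw [repunit_succ, pow_succ]; nlinarith [pow_nonneg (by omega : (0 : ℤ) ≤ p) n]

lemma two_mul_repunit_le (hp : 2 ≤ p) (n : ℕ) : 2 * repunit p n ≤ repunit p (n + 1) := by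
  rw [repunit_succ]; linarith [repunit_le_pow hp n]

lemma repunit_succ_le_add_one_pow (hp : 0 ≤ p) (n : ℕ) : repunit p (n + 1) ≤ (p + 1) ^ n := by
  induction n with
  | zero => simp [repunit]
  | succ n ih =>
    rw [repunit_succ, pow_succ, pow_succ]
    nlinarith [pow_le_pow_left₀ hp (by omega : p ≤ p + 1) n]

lemma exists_subset_Ico_of_two_mul_le {f : ℕ → ℤ} (hpos : ∀ n, 0 < f n)
    (hf : ∀ n, 2 * f n ≤ f (n + 1)) (M : ℤ) (c : ℕ) : ∃ n₀, {n | f n ≤ M ∧ M ≤ c * f n} ⊆ Ico n₀ (n₀ + c) := by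
  classical
  by_cases hS : ∃ n, f n ≤ M ∧ M ≤ c * f n
  swap
  · exact ⟨0, fun n hn => (hS ⟨n, hn⟩).elim⟩
  refine ⟨Nat.find hS, fun n hn => ?_⟩
  have hle : Nat.find hS ≤ n := Nat.find_min' hS hn
  have hgrow : ∀ k n, 2 ^ k * f n ≤ f (n + k) := by
    intro k n
    induction k with
    | zero => simp
    | succ k ih => rw [pow_succ', mul_assoc, ← add_assoc]; linarith [hf (n + k)]
  have hdouble : (2 : ℤ) ^ (n - Nat.find hS) * f (Nat.find hS) ≤ c * f (Nat.find hS) := by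
    have := hgrow (n - Nat.find hS) (Nat.find hS)
    rw [Nat.add_sub_cancel' hle] at this
    linarith [hn.1, (Nat.find_spec hS).2]
  have hpow : 2 ^ (n - Nat.find hS) ≤ c := by
    exact_mod_cast le_of_mul_le_mul_right hdouble (hpos _)
  have := Nat.lt_two_pow_self (n := n - Nat.find hS)
  simp only [coe_Ico, Set.mem_Ico]
  omega

noncomputable def block (n : ℕ) (c : ℤ) : ℕ →₀ ℤ := ∑ i ∈ range (n + 1), Finsupp.single i c

lemma block_apply (n : ℕ) (c : ℤ) (i : ℕ) : block n c i = if i ≤ n then c else 0 := by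
  simp [block, Finsupp.finsetSum_apply, Finsupp.single_apply]

lemma block_apply_succ_le {c : ℤ} (hc : 0 ≤ c) (n i : ℕ) : block n c (i + 1) ≤ block n c i := by
  simp only [block_apply]
  split_ifs <;> omega

lemma block_apply_sub_block_apply_succ (n : ℕ) (c : ℤ) (i : ℕ) :
    block n c i - block n c (i + 1) = if i = n then c else 0 := by
  simp only [block_apply]
  split_ifs <;> omega

lemma value_block (p : ℤ) (n : ℕ) (c : ℤ) : value p (block n c) = c * repunit p (n + 1) := by
  simp [block, value_single, repunit, mul_sum]

lemma rpSet_mono {M d d' : ℤ} (h : d ≤ d') : rpSet p M d ⊆ rpSet p M d' :=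
  fun _ hm => ⟨hm.1, hm.2.1, hm.2.2.1.trans h, hm.2.2.2⟩

lemma sub_block_mem_rpSet {M d : ℤ} {m : ℕ →₀ ℤ} (hm : m ∈ rpSet p M d) {n : ℕ}
    (htop : ∀ i, n < i → m i = 0) :
    m - block n (m n) ∈ rpSet p (M - m n * repunit p (n + 1)) (d - m n) := by
  obtain ⟨hnonneg, hdec, hm0, hval⟩ := hm
  have hanti : Antitone m := antitone_nat_of_succ_le hdec
  refine ⟨fun i => ?_, fun i => ?_, ?_, ?_⟩
  · rw [Finsupp.sub_apply, block_apply]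
    split_ifs with h
    · linarith [hanti h]
    · simpa using hnonneg i
  · rw [Finsupp.sub_apply, Finsupp.sub_apply, block_apply, block_apply]
    rcases lt_or_ge i n with h | h
    · rw [if_pos (by omega), if_pos h.le]; linarith [hdec i]
    · rw [if_neg (by omega), htop (i + 1) (by omega)]
      split_ifs with h'
      · linarith [hanti h']
      · simpa using hnonneg i
  · rw [Finsupp.sub_apply, block_apply, if_pos (Nat.zero_le n)]
    linarith
  · rw [map_sub, hval, value_block]

lemma le_mul_repunit_of_mem_rpSet (hp : 0 ≤ p) {M d : ℤ} {m : ℕ →₀ ℤ} (hm : m ∈ rpSet p M d)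
    {n : ℕ} (htop : ∀ i, n < i → m i = 0) : M ≤ d * repunit p (n + 1) := by
  obtain ⟨-, hdec, hm0, hval⟩ := hm
  have hdiff := value_nonneg hp (m := block n d - m) fun i => by
    rw [Finsupp.sub_apply, block_apply]
    split_ifs with h
    · linarith [antitone_nat_of_succ_le hdec (Nat.zero_le i)]
    · simp [htop i (not_le.mp h)]
  rw [map_sub, value_block, hval] at hdiff
  linarith

lemma exists_sub_block_mem_rpSet (hp : 0 ≤ p) {M : ℤ} {e : ℕ} {m : ℕ →₀ ℤ}
    (hm : m ∈ rpSet p M (e + 1)) (hm0 : m ≠ 0) :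
    ∃ n, ∃ c ∈ Icc (1 : ℤ) (e + 1), repunit p (n + 1) ≤ M ∧ M ≤ (e + 1) * repunit p (n + 1) ∧
      m - block n c ∈ rpSet p (M - c * repunit p (n + 1)) e := by
  have hne : m.support.Nonempty := Finsupp.support_nonempty_iff.mpr hm0
  set n := m.support.max' hne
  have htop : ∀ i, n < i → m i = 0 := fun i hi => by
    by_contra h
    exact absurd (m.support.le_max' i (Finsupp.mem_support_iff.mpr h)) (not_le.mpr hi)
  have hc : 1 ≤ m n := lt_of_le_of_ne (hm.1 n)
    (Finsupp.mem_support_iff.mp (m.support.max'_mem hne)).symm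
  have hc' : m n ≤ e + 1 := (antitone_nat_of_succ_le hm.2.1 (Nat.zero_le n)).trans hm.2.2.1
  have hrest : m - block n (m n) ∈ rpSet p (M - m n * repunit p (n + 1)) e :=
    rpSet_mono (by linarith) (sub_block_mem_rpSet hm htop)
  have hlower := value_nonneg hp hrest.1
  rw [hrest.2.2.2] at hlower
  refine ⟨n, m n, mem_Icc.mpr ⟨hc, hc'⟩, ?_,
    by exact_mod_cast le_mul_repunit_of_mem_rpSet hp hm htop, hrest⟩
  nlinarith [one_le_repunit_succ hp n]

lemma rpSet_zero_subset (p M : ℤ) : rpSet p M 0 ⊆ {0} := by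
  rintro m ⟨hnonneg, hdec, hm0, -⟩
  ext i
  have := antitone_nat_of_succ_le hdec (Nat.zero_le i)
  have := hnonneg i
  simp only [Finsupp.coe_zero, Pi.zero_apply]
  omega

lemma exists_encard_rpSet_le (hp : 2 ≤ p) (e : ℕ) : ∃ B : ℕ, ∀ M, (rpSet p M e).encard ≤ B := by
  induction e with
  | zero =>
    refine ⟨1, fun M => ?_⟩
    simpa using Set.encard_le_encard (rpSet_zero_subset p M)
  | succ e ih =>
    obtain ⟨B, hB⟩ := ih
    refine ⟨1 + (e + 1) * (e + 1) * B, fun M => ?_⟩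
    obtain ⟨n₀, hwindow⟩ := exists_subset_Ico_of_two_mul_le (f := fun n => repunit p (n + 1))
      (fun n => one_le_repunit_succ (by omega) n) (fun n => two_mul_repunit_le hp (n + 1)) M (e + 1)
    set S := Ico n₀ (n₀ + (e + 1)) ×ˢ Icc (1 : ℤ) (e + 1)
    have hcover : rpSet p M (e + 1) ⊆ {0} ∪ ⋃ x ∈ S,
        (· + block x.1 x.2) '' rpSet p (M - x.2 * repunit p (x.1 + 1)) e := by
      intro m hm
      rcases eq_or_ne m 0 with rfl | hm0
      · exact Or.inl rfl
      obtain ⟨n, c, hc, hlow, hhigh, hrest⟩ := exists_sub_block_mem_rpSet (by omega) hm hm0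
      refine Or.inr (Set.mem_biUnion (x := (n, c)) ?_ ⟨_, hrest, sub_add_cancel m _⟩)
      exact mem_product.mpr ⟨hwindow ⟨hlow, by exact_mod_cast hhigh⟩, hc⟩
    have hS : S.card = (e + 1) * (e + 1) := by simp [S]
    calc (rpSet p M (e + 1)).encard
        ≤ 1 + ∑ x ∈ S, ((· + block x.1 x.2) '' rpSet p (M - x.2 * repunit p (x.1 + 1)) e).encard :=
          (Set.encard_le_encard hcover).trans <| (Set.encard_union_le _ _).trans <| by
            simpa using S.set_encard_biUnion_le _
      _ ≤ 1 + ∑ _x ∈ S, (B : ℕ∞) := by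
          gcongr with x
          exact (Set.encard_image_le _ _).trans (hB _)
      _ = ((1 + (e + 1) * (e + 1) * B : ℕ) : ℕ∞) := by simp [hS]

lemma encard_rpSet_le_Zp (hp : 2 ≤ p) (M : ℤ) (e : ℕ) : (rpSet p M e).encard ≤ Zp p e := by
  obtain ⟨B, hB⟩ := exists_encard_rpSet_le hp e
  have hfin : ∀ M, (rpSet p M e).Finite := fun M => Set.finite_of_encard_le_coe (hB M)
  have hbdd : BddAbove {n : ℕ | ∃ M : ℤ, rp p M e = n} := by
    refine ⟨B, ?_⟩
    rintro _ ⟨M', rfl⟩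
    rw [rp_eq_ncard, ← ENat.natCast_le_natCast, (hfin M').cast_ncard_eq]
    exact hB M'
  rw [← (hfin M).cast_ncard_eq, ← rp_eq_ncard, ENat.natCast_le_natCast]
  exact le_csSup hbdd ⟨M, rfl⟩

noncomputable def blockSeq (p : ℤ) (d : ℕ) {k : ℕ} (x : Fin k → ℕ) : ℕ →₀ ℤ :=
  Finsupp.single 0 ((d : ℤ) - ∑ j, (x j : ℤ) * repunit p (j + 2)) + ∑ j : Fin k, block (j + 1) (x j)

lemma blockSeq_apply (p : ℤ) (d : ℕ) {k : ℕ} (x : Fin k → ℕ) (i : ℕ) :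
    blockSeq p d x i = Finsupp.single 0 ((d : ℤ) - ∑ j, (x j : ℤ) * repunit p (j + 2)) i +
      ∑ j : Fin k, block (j + 1) (x j) i := by
  simp [blockSeq]

lemma blockSeq_injective (p : ℤ) (d k : ℕ) : Function.Injective (blockSeq p d (k := k)) := by
  intro x y hxy
  funext j
  have hdiff : ∀ x, blockSeq p d x (j + 1) - blockSeq p d x (j + 1 + 1) = x j := by
    intro x
    rw [blockSeq_apply, blockSeq_apply, Finsupp.single_apply, Finsupp.single_apply,
      if_neg (by omega), if_neg (by omega), zero_add, zero_add, ← sum_sub_distrib]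
    simp_rw [block_apply_sub_block_apply_succ, add_left_inj, Fin.val_inj]
    simp
  exact_mod_cast (hdiff x).symm.trans (hxy ▸ hdiff y)

lemma blockSeq_mem_rpSet (hp : 0 ≤ p) {d k : ℕ} {x : Fin k → ℕ}
    (hx : ∑ j, (x j : ℤ) * repunit p (j + 2) ≤ d) : blockSeq p d x ∈ rpSet p d d := by
  have hR : ∀ j : Fin k, 1 ≤ repunit p (j + 2) := fun j => one_le_repunit_succ hp (j + 1)
  refine ⟨fun i => ?_, fun i => ?_, ?_, ?_⟩
  · rw [blockSeq_apply, Finsupp.single_apply]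
    refine add_nonneg (by split_ifs <;> omega) (sum_nonneg fun j _ => ?_)
    rw [block_apply]
    split_ifs <;> omega
  · rw [blockSeq_apply, blockSeq_apply, Finsupp.single_apply, if_neg (by omega)]
    refine add_le_add (by simp only [Finsupp.single_apply]; split_ifs <;> omega)
      (sum_le_sum fun j _ => block_apply_succ_le (by positivity) _ _)
  · have : ∑ j, (x j : ℤ) ≤ ∑ j, (x j : ℤ) * repunit p (j + 2) :=
      sum_le_sum fun j _ => le_mul_of_one_le_right (by positivity) (hR j)
    simp only [blockSeq_apply, block_apply, Finsupp.single_eq_same, zero_le, if_true]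
    linarith
  · simp only [blockSeq, map_add, map_sum, value_single, value_block, add_assoc]
    ring

lemma prod_le_encard_rpSet (hp : 0 ≤ p) (d : ℕ) {k : ℕ} (t : Fin k → ℕ)
    (ht : ∑ j, (t j : ℤ) * repunit p (j + 2) ≤ d) :
    ((∏ j, (t j + 1) : ℕ) : ℕ∞) ≤ (rpSet p d d).encard := by
  set box := Fintype.piFinset fun j => range (t j + 1)
  have hmem : ∀ x ∈ box, blockSeq p d x ∈ rpSet p d d := fun x hx =>
    blockSeq_mem_rpSet hp <| (sum_le_sum fun j _ => mul_le_mul_of_nonneg_right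
      (by exact_mod_cast Nat.lt_succ_iff.mp (mem_range.mp (Fintype.mem_piFinset.mp hx j)))
      (zero_le_one.trans (one_le_repunit_succ hp _))).trans ht
  calc ((∏ j, (t j + 1) : ℕ) : ℕ∞) = (box : Set (Fin k → ℕ)).encard := by
        rw [Set.encard_coe_eq_coe_finsetCard, Fintype.card_piFinset]
        simp
    _ = (blockSeq p d '' box).encard := ((blockSeq_injective p d k).injOn.encard_image).symm
    _ ≤ (rpSet p d d).encard :=
        Set.encard_le_encard (Set.image_subset_iff.mpr fun x hx => hmem x hx)

lemma tprod_le_one_of_nonneg {ι : Type*} {f : ι → ℝ} (h0 : ∀ i, 0 ≤ f i) (h1 : ∀ i, f i ≤ 1) :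
    ∏' i, f i ≤ 1 := by
  by_cases hf : Multipliable f
  · exact le_of_tendsto' hf.hasProd fun s => prod_le_one (fun i _ => h0 i) fun i _ => h1 i
  · rw [tprod_eq_one_of_not_multipliable hf]

lemma C1_le_half (p : ℕ) : C1 p ≤ 1 / 2 := by
  have hle : ∏' j : ℕ, (1 - 1 / (((p : ℝ) + 1) ^ (j + 1) + 1)) ≤ 1 := by
    refine tprod_le_one_of_nonneg (fun j => ?_) fun j => ?_
    · rw [sub_nonneg, div_le_one (by positivity)]
      linarith [pow_nonneg (by positivity : (0 : ℝ) ≤ p + 1) (j + 1)]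
    · linarith [one_div_nonneg.mpr (by positivity : (0 : ℝ) ≤ ((p : ℝ) + 1) ^ (j + 1) + 1)]
  rw [C1]
  linarith

lemma factorial_le_two_mul_Gamma {K : ℕ} {x : ℝ} (hK : K ≤ x) (hx : x ≤ K + 1) :
    (K ! : ℝ) ≤ 2 * Gamma (x + 1) := by
  have hΓ : ((K + 1)! : ℝ) ≤ (x + 1) * Gamma (x + 1) := by
    rw [← Gamma_add_one (by linarith), ← Gamma_nat_eq_factorial, Nat.cast_succ]
    exact Gamma_strictMonoOn_Ici.monotoneOn (by simp; linarith) (by simp; linarith) (by linarith)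
  rw [Nat.factorial_succ, Nat.cast_mul] at hΓ
  have hΓpos : 0 < Gamma (x + 1) := Gamma_pos_of_pos (by linarith)
  push_cast at hΓ
  nlinarith

lemma pow_self_le_pow_mul_factorial {b : ℝ} (hb : exp 1 ≤ b) (K : ℕ) :
    (K : ℝ) ^ K ≤ b ^ K * K ! := by
  have h := pow_div_factorial_le_exp _ (Nat.cast_nonneg K) K
  rw [div_le_iff₀ (by positivity)] at h
  calc (K : ℝ) ^ K ≤ exp K * K ! := h
    _ = exp 1 ^ K * K ! := by rw [← exp_nat_mul, mul_one]
    _ ≤ b ^ K * K ! := by gcongr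

lemma sum_range_cast_add_one (n : ℕ) : ∑ j ∈ range n, ((j : ℝ) + 1) = n * (n + 1) / 2 := by
  induction n with
  | zero => simp
  | succ n ih => rw [sum_range_succ, ih]; push_cast; ring

lemma prod_div_mul_pow_eq {b d : ℝ} (hb : 1 < b) (hd : 0 < d) (K : ℕ) :
    ∏ j : Fin K, d / (K * b ^ ((j : ℕ) + 1)) =
      b ^ (K * logb b d - K * (K + 1) / 2) / (K : ℝ) ^ K := by
  have hb0 : 0 < b := by linarith
  have hterm : ∀ j : ℕ, d / (K * b ^ (j + 1)) = b ^ (logb b d - (j + 1)) / K := by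
    intro j
    rw [rpow_sub hb0, rpow_logb hb0 hb.ne' hd, ← Nat.cast_succ, rpow_natCast, mul_comm, div_div]
  rw [Fin.prod_univ_eq_prod_range (fun j => d / (K * b ^ (j + 1))) K,
    prod_congr rfl fun j _ => hterm j, prod_div_distrib, prod_const, card_range, ← rpow_sum_of_pos hb0, sum_sub_distrib,
    sum_range_cast_add_one, sum_const, card_range, nsmul_eq_mul]

lemma half_mul_rpow_div_Gamma_le_prod {b d : ℝ} {K : ℕ} (hb : exp 1 ≤ b) (hd : 0 < d)
    (hK : K ≤ logb b d) (hK' : logb b d ≤ K + 1) :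
    1 / 2 * d ^ ((logb b d - 3) / 2) / Gamma (logb b d + 1) ≤
      ∏ j : Fin K, d / (K * b ^ ((j : ℕ) + 1)) := by
  have hb1 : 1 < b := (one_lt_exp_iff.mpr one_pos).trans_le hb
  have hb0 : 0 < b := by linarith
  rw [prod_div_mul_pow_eq hb1 hd]
  set x := logb b d
  have hΓ : 0 < Gamma (x + 1) := Gamma_pos_of_pos (by linarith [(Nat.cast_nonneg K : (0 : ℝ) ≤ K)])
  have hKK : (0 : ℝ) < (K : ℝ) ^ K := by
    rcases K.eq_zero_or_pos with hK0 | hK0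
    · simp [hK0]
    · positivity
  rw [div_le_div_iff₀ hΓ hKK]
  conv_lhs => rw [← rpow_logb hb0 hb1.ne' hd, ← rpow_mul hb0.le]
  have hexp : x * ((x - 3) / 2) ≤ K * x - K * (K + 1) / 2 - K := by
    -- equivalent to `(x - K) (x - K - 3) ≤ 0`
    nlinarith [mul_nonneg (sub_nonneg.2 hK) (by linarith : (0 : ℝ) ≤ K + 3 - x)]
  calc 1 / 2 * b ^ (x * ((x - 3) / 2)) * (K : ℝ) ^ K
      ≤ 1 / 2 * b ^ (K * x - K * (K + 1) / 2 - K) * (b ^ K * K !) := by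
        gcongr
        · exact hb1.le
        · exact pow_self_le_pow_mul_factorial hb K
    _ = K ! / 2 * b ^ (K * x - K * (K + 1) / 2) := by
        rw [rpow_sub hb0, rpow_natCast]
        field_simp
    _ ≤ b ^ (K * x - K * (K + 1) / 2) * Gamma (x + 1) := by
        rw [mul_comm]
        gcongr
        linarith [factorial_le_two_mul_Gamma hK hK']

lemma sum_floor_mul_repunit_le (p d K : ℕ) :
    ∑ j : Fin K, (⌊(d : ℝ) / (K * ((p : ℝ) + 1) ^ ((j : ℕ) + 1))⌋₊ : ℤ) * repunit p (j + 2)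
      ≤ d := by
  have hR : ∀ j : ℕ, (repunit p (j + 2) : ℝ) ≤ ((p : ℝ) + 1) ^ (j + 1) := fun j => by
    exact_mod_cast repunit_succ_le_add_one_pow (Int.natCast_nonneg p) (j + 1)
  have hR0 : ∀ j : ℕ, (0 : ℝ) ≤ repunit p (j + 2) := fun j => by
    exact_mod_cast (zero_le_one.trans (one_le_repunit_succ (Int.natCast_nonneg p) (j + 1)))
  suffices h : ∑ j : Fin K, (⌊(d : ℝ) / (K * ((p : ℝ) + 1) ^ ((j : ℕ) + 1))⌋₊ : ℝ) *
      (repunit p (j + 2) : ℝ) ≤ d by exact_mod_cast h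
  rcases K.eq_zero_or_pos with rfl | hK
  · simp
  calc _ ≤ ∑ _j : Fin K, (d : ℝ) / K := sum_le_sum fun j _ => by
        calc _ ≤ (d : ℝ) / (K * ((p : ℝ) + 1) ^ ((j : ℕ) + 1)) * ((p : ℝ) + 1) ^ ((j : ℕ) + 1) :=
              mul_le_mul (Nat.floor_le (by positivity)) (hR j) (hR0 j) (by positivity)
          _ = (d : ℝ) / K := by field_simp
    _ = d := by
        rw [sum_const, card_univ, Fintype.card_fin, nsmul_eq_mul]
        field_simp

end RepunitPartition

open RepunitPartition in
/-- `Z_p(d) ≥ C_1 · d^{(log_{p+1}(d)−3)/2} / Γ(log_{p+1}(d)+1)` for `d ≥ 1`. -/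
theorem stmt_17 (p : ℕ) (hp : p.Prime) (d : ℕ) (hd : 1 ≤ d) :
    C1 p * (d : ℝ) ^ ((Real.logb (p + 1) d - 3) / 2) / Real.Gamma (Real.logb (p + 1) d + 1)
      ≤ (Zp p d : ℝ) := by
  set L := logb (p + 1) d
  set K := ⌊L⌋₊
  set t : Fin K → ℕ := fun j => ⌊(d : ℝ) / (K * ((p : ℝ) + 1) ^ ((j : ℕ) + 1))⌋₊
  have hp2 : (2 : ℝ) ≤ p := by exact_mod_cast hp.two_le
  have hexp : exp 1 ≤ p + 1 := by linarith [exp_one_lt_d9]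
  have hd0 : (0 : ℝ) < d := by exact_mod_cast hd
  have hL : 0 ≤ L := logb_nonneg (by linarith) (by exact_mod_cast hd)
  have hcount : ((∏ j, (t j + 1) : ℕ) : ℕ∞) ≤ Zp p d :=
    (prod_le_encard_rpSet (by positivity) d t (sum_floor_mul_repunit_le p d K)).trans
      (encard_rpSet_le_Zp (by exact_mod_cast hp.two_le) d d)
  calc C1 p * (d : ℝ) ^ ((L - 3) / 2) / Gamma (L + 1)
      ≤ 1 / 2 * (d : ℝ) ^ ((L - 3) / 2) / Gamma (L + 1) := by
        gcongr
        exact C1_le_half p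
    _ ≤ ∏ j : Fin K, (d : ℝ) / (K * ((p : ℝ) + 1) ^ ((j : ℕ) + 1)) :=
        half_mul_rpow_div_Gamma_le_prod hexp hd0 (Nat.floor_le hL) (Nat.lt_floor_add_one L).le
    _ ≤ ∏ j, ((t j : ℝ) + 1) :=
        prod_le_prod (fun j _ => by positivity) fun j _ => (Nat.lt_floor_add_one _).le
    _ ≤ Zp p d := by exact_mod_cast ENat.natCast_le_natCast.mp hcount
end
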